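/- arXiv:2106.13240 — 4 statements merged into one kernel-verified Lean document; each statement's English description precedes it below -/
import Mathlib

section
/- The set {(x, y, w) ∈ ℝ³ : x > 0, y > 0, w ≥ (2/3)·(x + y - xy/(x+y))} is a convex subset of ℝ³. (This is the relaxed average-pressure constraint obtained by replacing the equality w̃ = (2/3)(p_m + p_n - p_m p_n/(p_m + p_n)) by an inequality.) -/
lemma pos_comb (x1 x2 a b : ℝ) (hx1 : 0 < x1) (hx2 : 0 < x2)
    (ha : 0 ≤ a) (hb : 0 ≤ b) (hab : a + b = 1) : 0 < a * x1 + b * x2 := by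
  rcases ha.lt_or_eq with h | h
  · nlinarith
  · have hb1 : b = 1 := by linarith
    rw [← h, hb1]; linarith

lemma harm_concave (x1 y1 x2 y2 a b : ℝ) (hx1 : 0 < x1) (hy1 : 0 < y1)
    (hx2 : 0 < x2) (hy2 : 0 < y2) (ha : 0 ≤ a) (hb : 0 ≤ b) (hab : a + b = 1) :
    a * (x1 * y1 / (x1 + y1)) + b * (x2 * y2 / (x2 + y2)) ≤
      (a * x1 + b * x2) * (a * y1 + b * y2) / ((a * x1 + b * x2) + (a * y1 + b * y2)) := by
  have hs1 : 0 < x1 + y1 := by linarith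
  have hs2 : 0 < x2 + y2 := by linarith
  have hx : 0 < a * x1 + b * x2 := pos_comb x1 x2 a b hx1 hx2 ha hb hab
  have hy : 0 < a * y1 + b * y2 := pos_comb y1 y2 a b hy1 hy2 ha hb hab
  have hs : 0 < (a * x1 + b * x2) + (a * y1 + b * y2) := by linarith
  have h1 : a * (x1 * y1 / (x1 + y1)) = a * (x1 * y1) / (x1 + y1) := by ring
  have h2 : b * (x2 * y2 / (x2 + y2)) = b * (x2 * y2) / (x2 + y2) := by ring
  rw [h1, h2, div_add_div _ _ (ne_of_gt hs1) (ne_of_gt hs2), div_le_div_iff₀ (by positivity) hs]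
  nlinarith [sq_nonneg (x1 * y2 - x2 * y1), mul_nonneg ha hb, sq_nonneg a, sq_nonneg b,
    mul_pos hs1 hs2, mul_pos hx1 hy2, mul_pos hx2 hy1]

/-- The relaxed average-pressure constraint set is convex. -/
theorem relaxed_average_pressure_convex :
    Convex ℝ {p : ℝ × ℝ × ℝ |
      0 < p.1 ∧ 0 < p.2.1 ∧
        p.2.2 ≥ (2 / 3) * (p.1 + p.2.1 - p.1 * p.2.1 / (p.1 + p.2.1))} := by
  rintro ⟨x1, y1, w1⟩ ⟨hx1, hy1, hw1⟩ ⟨x2, y2, w2⟩ ⟨hx2, hy2, hw2⟩ a b ha hb hab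
  simp only [Set.mem_setOf_eq, Prod.smul_mk, Prod.mk_add_mk, smul_eq_mul] at *
  refine ⟨pos_comb x1 x2 a b hx1 hx2 ha hb hab, pos_comb y1 y2 a b hy1 hy2 ha hb hab, ?_⟩
  have key := harm_concave x1 y1 x2 y2 a b hx1 hy1 hx2 hy2 ha hb hab
  nlinarith [key, mul_le_mul_of_nonneg_left hw1 ha, mul_le_mul_of_nonneg_left hw2 hb]
end

section
/- Let c < 0 be a real number. Then for every real number x with x ≤ -(1+√2)·c, the inequality x·|x| ≤ -2c·x + c² holds, with equality if and only if x = c or x = -(1+√2)·c. -/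
/-- For c < 0 and x ≤ -(1+√2)c, the tangent line of x·|x| at c overestimates x·|x|,
with equality exactly at x = c and x = -(1+√2)c. -/
theorem tangent_overestimator (c : ℝ) (hc : c < 0) :
    ∀ x : ℝ, x ≤ -(1 + Real.sqrt 2) * c →
      x * |x| ≤ -(2 * c) * x + c ^ 2 ∧
        (x * |x| = -(2 * c) * x + c ^ 2 ↔ x = c ∨ x = -(1 + Real.sqrt 2) * c) := by
  have hs : Real.sqrt 2 ^ 2 = 2 := Real.sq_sqrt (by norm_num)
  have hs1 : 1 < Real.sqrt 2 := by
    nlinarith [Real.sqrt_nonneg 2, hs]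
  intro x hx
  rcases le_or_gt x 0 with h | h
  · rw [abs_of_nonpos h]
    constructor
    · nlinarith [sq_nonneg (x - c)]
    · constructor
      · intro he
        left
        have h0 : (x - c) ^ 2 = 0 := by nlinarith
        have := pow_eq_zero_iff (n := 2) (by norm_num) |>.mp h0
        linarith [sub_eq_zero.mp this]
      · rintro (rfl | rfl)
        · ring
        · exfalso; nlinarith
  · rw [abs_of_pos h]
    have h1 : x + (1 + Real.sqrt 2) * c ≤ 0 := by linarith
    have h2 : 0 < x + (1 - Real.sqrt 2) * c := by nlinarith
    have hp : (x + (1 + Real.sqrt 2) * c) * (x + (1 - Real.sqrt 2) * c) ≤ 0 :=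
      mul_nonpos_of_nonpos_of_nonneg h1 h2.le
    constructor
    · nlinarith [hs, hp]
    · constructor
      · intro he
        right
        have h0 : (x + (1 + Real.sqrt 2) * c) * (x + (1 - Real.sqrt 2) * c) = 0 := by
          nlinarith [hs]
        rcases mul_eq_zero.mp h0 with h3 | h3
        · linarith
        · linarith
      · rintro (rfl | rfl)
        · exfalso; linarith
        · linear_combination c ^ 2 * hs
end

section
/- Let a < 0 < b be real numbers satisfying a ≥ -(1+√2)·b and b ≤ -(1+√2)·a, and set α = (1-√2)·a, β = (1-√2)·b, γ = (b + (1-√2)a)/2, and δ = (a + (1-√2)b)/2. Then for every x ∈ [a, b], the point u = x·|x| satisfies all six envelope inequalities: (i) u ≥ (2-√8)·a·x - (3-√8)·a², (ii) u ≥ 2b·x - b², (iii) u ≥ γ|γ| + 2|γ|(x - γ), (iv) u ≤ (√8-2)·b·x + (3-√8)·b², (v) u ≤ -2a·x + a², and (vi) u ≤ δ|δ| + 2|δ|(x - δ). -/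
/-- Lower tangent line to x·|x| at a point t ≥ 0. -/
lemma aux_lower_xabsx (t x : ℝ) (ht : 0 ≤ t) (h : (1 - Real.sqrt 2) * x ≤ t) :
    2 * t * x - t ^ 2 ≤ x * |x| := by
  have hs : Real.sqrt 2 ^ 2 = 2 := Real.sq_sqrt (by norm_num)
  have hs0 : 0 ≤ Real.sqrt 2 := Real.sqrt_nonneg 2
  rcases le_or_gt 0 x with hx | hx
  · rw [abs_of_nonneg hx]; nlinarith [sq_nonneg (x - t)]
  · rw [abs_of_neg hx]
    nlinarith [mul_nonneg (sub_nonneg.2 h)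
      (show 0 ≤ t - (1 + Real.sqrt 2) * x by nlinarith), hs, sq_nonneg x]

/-- Upper tangent line to x·|x| at a point t ≤ 0. -/
lemma aux_upper_xabsx (t x : ℝ) (ht : t ≤ 0) (h : x ≤ -(1 + Real.sqrt 2) * t) :
    x * |x| ≤ t ^ 2 - 2 * t * x := by
  have hs : Real.sqrt 2 ^ 2 = 2 := Real.sq_sqrt (by norm_num)
  have hs0 : 0 ≤ Real.sqrt 2 := Real.sqrt_nonneg 2
  rcases le_or_gt x 0 with hx | hx
  · rw [abs_of_nonpos hx]; nlinarith [sq_nonneg (x - t)]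
  · rw [abs_of_pos hx]
    nlinarith [mul_nonneg (show 0 ≤ -(1 + Real.sqrt 2) * t - x by linarith)
      (show 0 ≤ x - (Real.sqrt 2 - 1) * t by nlinarith), hs, sq_nonneg x]

/-- The six supporting hyperplane inequalities of the polyhedral envelope of
U = { x·|x| : x ∈ [a,b] } hold for every x ∈ [a,b]. -/
theorem polyhedral_envelope_xabsx (a b : ℝ) (hab : a < 0) (hb : 0 < b)
    (ha' : a ≥ -(1 + Real.sqrt 2) * b) (hb' : b ≤ -(1 + Real.sqrt 2) * a) :
    let γ : ℝ := (b + (1 - Real.sqrt 2) * a) / 2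
    let δ : ℝ := (a + (1 - Real.sqrt 2) * b) / 2
    ∀ x : ℝ, a ≤ x → x ≤ b →
      x * |x| ≥ (2 - Real.sqrt 8) * a * x - (3 - Real.sqrt 8) * a ^ 2 ∧
      x * |x| ≥ 2 * b * x - b ^ 2 ∧
      x * |x| ≥ γ * |γ| + 2 * |γ| * (x - γ) ∧
      x * |x| ≤ (Real.sqrt 8 - 2) * b * x + (3 - Real.sqrt 8) * b ^ 2 ∧
      x * |x| ≤ -(2 * a) * x + a ^ 2 ∧
      x * |x| ≤ δ * |δ| + 2 * |δ| * (x - δ) := by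
  intro γ δ x hax hxb
  set s := Real.sqrt 2 with hsdef
  have hs : s ^ 2 = 2 := Real.sq_sqrt (by norm_num)
  have hs0 : 0 ≤ s := Real.sqrt_nonneg 2
  have hs1 : 1 ≤ s := by nlinarith
  have h8 : Real.sqrt 8 = 2 * s := by
    rw [hsdef, show (8 : ℝ) = 2 ^ 2 * 2 by norm_num,
      Real.sqrt_mul (by positivity), Real.sqrt_sq (by norm_num)]
  have hγ : γ = (b + (1 - s) * a) / 2 := rfl
  have hδ : δ = (a + (1 - s) * b) / 2 := rfl
  clear_value γ δ
  -- key consequences of the hypotheses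
  have key1 : (1 - s) * a ≤ b := by
    nlinarith [mul_nonneg (sub_nonneg.2 hs1) (show 0 ≤ a + (1 + s) * b by linarith)]
  have key2 : a ≤ (1 - s) * b := by
    nlinarith [mul_nonneg (sub_nonneg.2 hs1) (show 0 ≤ -(1 + s) * a - b by linarith)]
  have hxa : (0 : ℝ) ≤ x - a := by linarith
  have hfac : (1 - s) * x ≤ (1 - s) * a := by
    nlinarith [mul_nonneg (sub_nonneg.2 hs1) hxa]
  have hγ0 : 0 ≤ γ := by rw [hγ]; nlinarith
  have hδ0 : δ ≤ 0 := by rw [hδ]; nlinarith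
  refine ⟨?_, ?_, ?_, ?_, ?_, ?_⟩
  · -- (i) lower tangent at α = (1-√2)a
    have ht : 0 ≤ (1 - s) * a := by nlinarith
    have := aux_lower_xabsx ((1 - s) * a) x ht (by linarith)
    rw [h8, ge_iff_le]
    nlinarith [this, hs, sq_nonneg a]
  · -- (ii) lower tangent at b
    have := aux_lower_xabsx b x hb.le (by linarith)
    rw [ge_iff_le]; linarith
  · -- (iii) lower tangent at γ
    have hcond : (1 - s) * x ≤ γ := by rw [hγ]; linarith
    have := aux_lower_xabsx γ x hγ0 hcond
    rw [ge_iff_le, abs_of_nonneg hγ0]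
    linarith [this]
  · -- (iv) upper tangent at β = (1-√2)b
    have ht : (1 - s) * b ≤ 0 := by nlinarith
    have hcond : x ≤ -(1 + s) * ((1 - s) * b) := by nlinarith
    have := aux_upper_xabsx ((1 - s) * b) x ht hcond
    rw [h8]
    nlinarith [this, hs, sq_nonneg b]
  · -- (v) upper tangent at a
    have := aux_upper_xabsx a x hab.le (by linarith)
    linarith
  · -- (vi) upper tangent at δ
    have hcond : x ≤ -(1 + s) * δ := by rw [hδ]; nlinarith
    have := aux_upper_xabsx δ x hδ0 hcond
    rw [abs_of_nonpos hδ0]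
    linarith [this]
end

section
/- Let a < b be real numbers. The convex hull of the set {(x, x²) : x ∈ [a, b]} ⊆ ℝ² equals the set {(x, v) ∈ ℝ² : a ≤ x ≤ b, x² ≤ v ≤ (a+b)·x - a·b}. -/
/-!
The region is the intersection of the epigraph of the convex function `x ↦ x ^ 2` with the
hypograph of the affine secant `ℓ x = (a + b) * x - a * b`, hence convex, and it contains the graph;
this gives `⊆`. Conversely a point `(x, v)` of the region lies on the vertical segment from `(x, x ^ 2)` to
`(x, ℓ x)`, and the latter lies on the chord joining `(a, a ^ 2)` and `(b, b ^ 2)`.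
-/

open Set

section

variable {𝕜 E F β : Type*}

theorem AffineMap.concaveOn [Ring 𝕜] [PartialOrder 𝕜] [IsOrderedRing 𝕜]
    [AddCommGroup E] [Module 𝕜 E] [AddCommGroup β] [PartialOrder β] [Module 𝕜 β]
    (g : E →ᵃ[𝕜] β) {s : Set E} (hs : Convex 𝕜 s) : ConcaveOn 𝕜 s g :=
  ⟨hs, fun _ _ _ _ _ _ _ _ hab => (Convex.combo_affine_apply hab).ge⟩

theorem ConvexOn.convex_between [Ring 𝕜] [PartialOrder 𝕜] [IsOrderedRing 𝕜]
    [AddCommGroup E] [Module 𝕜 E] [AddCommGroup β] [PartialOrder β] [IsOrderedAddMonoid β]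
    [Module 𝕜 β] [PosSMulMono 𝕜 β] {s : Set E} {f g : E → β}
    (hf : ConvexOn 𝕜 s f) (hg : ConcaveOn 𝕜 s g) :
    Convex 𝕜 {p : E × β | p.1 ∈ s ∧ f p.1 ≤ p.2 ∧ p.2 ≤ g p.1} := by
  convert hf.convex_epigraph.inter hg.convex_hypograph using 1
  ext p
  simp only [mem_ofPred_eq, mem_inter_iff]
  tauto

theorem AffineMap.mk_apply_mem_segment [Ring 𝕜] [PartialOrder 𝕜] [IsOrderedRing 𝕜]
    [AddCommGroup E] [Module 𝕜 E] [AddCommGroup F] [Module 𝕜 F]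
    (g : E →ᵃ[𝕜] F) {a b x : E} (hx : x ∈ segment 𝕜 a b) :
    (x, g x) ∈ segment 𝕜 (a, g a) (b, g b) := by
  have := mem_image_of_mem ((AffineMap.id 𝕜 E).prod g) hx
  rwa [image_segment] at this

theorem Convex.mk_mem_of_le_of_le [Field 𝕜] [LinearOrder 𝕜] [IsStrictOrderedRing 𝕜]
    [AddCommGroup E] [Module 𝕜 E] {t : Set (E × 𝕜)} (ht : Convex 𝕜 t) {x : E} {y₁ y₂ v : 𝕜}
    (h₁ : (x, y₁) ∈ t) (h₂ : (x, y₂) ∈ t) (hv₁ : y₁ ≤ v) (hv₂ : v ≤ y₂) : (x, v) ∈ t := by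
  refine ht.segment_subset h₁ h₂ ?_
  rw [← Prod.image_mk_segment_right, segment_eq_Icc (hv₁.trans hv₂)]
  exact ⟨v, ⟨hv₁, hv₂⟩, rfl⟩

end

def sqSecant (a b : ℝ) : ℝ →ᵃ[ℝ] ℝ :=
  (a + b) • AffineMap.id ℝ ℝ - AffineMap.const ℝ ℝ (a * b)

theorem sqSecant_apply (a b x : ℝ) : sqSecant a b x = (a + b) * x - a * b := rfl

theorem mk_sqSecant_mem_segment {a b x : ℝ} (hx : x ∈ Icc a b) :
    (x, sqSecant a b x) ∈ segment ℝ (a, a ^ 2) (b, b ^ 2) := by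
  have hab := hx.1.trans hx.2
  have h := (sqSecant a b).mk_apply_mem_segment (by rwa [segment_eq_Icc hab])
  rwa [sqSecant_apply a b a, sqSecant_apply a b b, show (a + b) * a - a * b = a ^ 2 by ring,
    show (a + b) * b - a * b = b ^ 2 by ring] at h

theorem convexHull_sq_graph_general (a b : ℝ) :
    convexHull ℝ {p : ℝ × ℝ | ∃ x ∈ Set.Icc a b, p = (x, x ^ 2)} =
      {p : ℝ × ℝ | a ≤ p.1 ∧ p.1 ≤ b ∧ p.1 ^ 2 ≤ p.2 ∧
        p.2 ≤ (a + b) * p.1 - a * b} := by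
  set G : Set (ℝ × ℝ) := {p | ∃ x ∈ Icc a b, p = (x, x ^ 2)}
  have mem_graph {x : ℝ} (hx : x ∈ Icc a b) : (x, x ^ 2) ∈ G := ⟨x, hx, rfl⟩
  have hsq : ConvexOn ℝ (Icc a b) fun x : ℝ => x ^ 2 :=
    even_two.convexOn_pow.subset (subset_univ _) (convex_Icc a b)
  have hregion := hsq.convex_between ((sqSecant a b).concaveOn (convex_Icc a b))
  simp only [mem_Icc, sqSecant_apply, and_assoc] at hregion
  refine (convexHull_min ?_ hregion).antisymm ?_
  · rintro _ ⟨x, ⟨hax, hxb⟩, rfl⟩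
    exact ⟨hax, hxb, le_rfl, by nlinarith⟩
  · rintro ⟨x, v⟩ ⟨hax, hxb, hlow, hhigh⟩
    have hab := hax.trans hxb
    have hsecant : (x, sqSecant a b x) ∈ convexHull ℝ G :=
      segment_subset_convexHull (mem_graph (left_mem_Icc.2 hab)) (mem_graph (right_mem_Icc.2 hab))
        (mk_sqSecant_mem_segment ⟨hax, hxb⟩)
    exact (convex_convexHull ℝ G).mk_mem_of_le_of_le
      (subset_convexHull ℝ G (mem_graph ⟨hax, hxb⟩)) hsecant hlow hhigh

/-- The convex hull of the graph of the square function over [a,b] is the region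
between the parabola and the secant line through the endpoints. -/
theorem convexHull_sq_graph (a b : ℝ) (hab : a < b) :
    convexHull ℝ {p : ℝ × ℝ | ∃ x ∈ Set.Icc a b, p = (x, x ^ 2)} =
      {p : ℝ × ℝ | a ≤ p.1 ∧ p.1 ≤ b ∧ p.1 ^ 2 ≤ p.2 ∧
        p.2 ≤ (a + b) * p.1 - a * b} :=
  convexHull_sq_graph_general a b
end
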